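/- arXiv:2202.03654 — 4 statements merged into one kernel-verified Lean document; each statement's English description precedes it below -/
import Mathlib

section
/- The dimension of RM(m,r), i.e., the number of rows of the matrix [[1,0],[1,1]]^{⊗m} with Hamming weight at least 2^{m-r}, equals the sum over i = 0 to r of binomial(m,i). -/
/-!
Row `(a, j)` of the `(m+1)`-st Kronecker power is the product of row `a` of `[[1,0],[1,1]]` with
row `j` of the `m`-th power, so its weight is `2^a` times the weight of row `j`. Hence the number
of rows of weight at least `2^s` satisfies Pascal's recursion in `(m, s)`, exactly as the partial
sums `∑_{i ≤ m-s} C(m,i)` do.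
-/

open Matrix Kronecker

/-- The `m`-th Kronecker power of a 2×2 matrix, as a `2^m × 2^m` matrix. -/
def kronPow {R : Type*} [CommRing R] (A : Matrix (Fin 2) (Fin 2) R) :
    (m : ℕ) → Matrix (Fin (2 ^ m)) (Fin (2 ^ m)) R
  | 0 => 1
  | m + 1 =>
    Matrix.reindex (finProdFinEquiv.trans (finCongr (by rw [pow_succ]; ring)))
      (finProdFinEquiv.trans (finCongr (by rw [pow_succ]; ring))) (A ⊗ₖ kronPow A m)

/-- The polarization kernel `[[1,0],[1,1]]` over GF(2). -/
def Fmat : Matrix (Fin 2) (Fin 2) (ZMod 2) := !![1, 0; 1, 1]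

theorem hammingNorm_comp_equiv {ι κ M : Type*} [Fintype ι] [Fintype κ] [Zero M] [DecidableEq M]
    (σ : ι ≃ κ) (v : κ → M) : hammingNorm (v ∘ σ) = hammingNorm v :=
  Finset.card_equiv σ (by simp)

theorem hammingNorm_mul_apply {ι κ M : Type*} [Fintype ι] [Fintype κ] [MulZeroClass M]
    [NoZeroDivisors M] [DecidableEq M] (v : ι → M) (w : κ → M) :
    hammingNorm (fun p : ι × κ => v p.1 * w p.2) = hammingNorm v * hammingNorm w := by
  rw [hammingNorm, hammingNorm, hammingNorm, ← Finset.card_product]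
  congr 1
  ext p
  simp

def kronPowSuccEquiv (m : ℕ) : Fin 2 × Fin (2 ^ m) ≃ Fin (2 ^ (m + 1)) :=
  finProdFinEquiv.trans (finCongr (by rw [pow_succ]; ring))

section KronPow

variable {R : Type*} [CommRing R]

theorem kronPow_succ_apply (A : Matrix (Fin 2) (Fin 2) R) (m : ℕ) (p q : Fin 2 × Fin (2 ^ m)) :
    kronPow A (m + 1) (kronPowSuccEquiv m p) (kronPowSuccEquiv m q)
      = A p.1 q.1 * kronPow A m p.2 q.2 := by
  simp [kronPow, kronPowSuccEquiv]

variable [NoZeroDivisors R] [DecidableEq R]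

theorem hammingNorm_kronPow_succ_row (A : Matrix (Fin 2) (Fin 2) R) (m : ℕ)
    (p : Fin 2 × Fin (2 ^ m)) :
    hammingNorm (kronPow A (m + 1) (kronPowSuccEquiv m p))
      = hammingNorm (A p.1) * hammingNorm (kronPow A m p.2) := by
  rw [← hammingNorm_comp_equiv (kronPowSuccEquiv m), ← hammingNorm_mul_apply]
  exact congrArg hammingNorm (funext (kronPow_succ_apply A m p))

theorem hammingNorm_kronPow_pos [Nontrivial R] {A : Matrix (Fin 2) (Fin 2) R}
    (hA : ∀ a, 0 < hammingNorm (A a)) (m : ℕ) (j : Fin (2 ^ m)) :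
    0 < hammingNorm (kronPow A m j) := by
  induction m with
  | zero =>
    rw [hammingNorm_pos_iff]
    exact fun h => (one_ne_zero : (1 : R) ≠ 0) (by simpa [kronPow] using congrFun h j)
  | succ m ih =>
    rw [← (kronPowSuccEquiv m).apply_symm_apply j, hammingNorm_kronPow_succ_row]
    exact Nat.mul_pos (hA _) (ih _)

end KronPow

theorem hammingNorm_Fmat (a : Fin 2) : hammingNorm (Fmat a) = 2 ^ (a : ℕ) := by
  fin_cases a <;> decide

def heavyRowCount (m s : ℕ) : ℕ :=
  (Finset.univ.filter fun j : Fin (2 ^ m) => 2 ^ s ≤ hammingNorm (kronPow Fmat m j)).card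

theorem heavyRowCount_zero (m : ℕ) : heavyRowCount m 0 = 2 ^ m := by
  have hpos : ∀ j, 0 < hammingNorm (kronPow Fmat m j) :=
    hammingNorm_kronPow_pos (fun a => by rw [hammingNorm_Fmat]; positivity) m
  rw [heavyRowCount, Finset.filter_true_of_mem fun j _ => (pow_zero 2).trans_le (hpos j),
    Finset.card_univ, Fintype.card_fin]

theorem heavyRowCount_zero_succ (s : ℕ) : heavyRowCount 0 (s + 1) = 0 := by
  have h1 : ∀ j : Fin (2 ^ 0), hammingNorm (kronPow Fmat 0 j) = 1 := by decide
  simp [heavyRowCount, h1]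

theorem heavyRowCount_succ_succ (m s : ℕ) :
    heavyRowCount (m + 1) (s + 1) = heavyRowCount m (s + 1) + heavyRowCount m s := by
  have hsplit : heavyRowCount (m + 1) (s + 1) = (Finset.univ.filter fun p : Fin 2 × Fin (2 ^ m) =>
      2 ^ (s + 1) ≤ 2 ^ (p.1 : ℕ) * hammingNorm (kronPow Fmat m p.2)).card :=
    (Finset.card_equiv (kronPowSuccEquiv m)
      (by simp [hammingNorm_kronPow_succ_row, hammingNorm_Fmat])).symm
  rw [hsplit, Finset.card_filter, Fintype.sum_prod_type, Fin.sum_univ_two, heavyRowCount,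
    heavyRowCount, Finset.card_filter, Finset.card_filter]
  simp [pow_succ, mul_comm 2]

theorem sum_range_succ_choose_succ (m t : ℕ) :
    ∑ i ∈ Finset.range (t + 1), (m + 1).choose i
      = ∑ i ∈ Finset.range t, m.choose i + ∑ i ∈ Finset.range (t + 1), m.choose i := by
  simp only [Finset.sum_range_succ' _ t, Nat.choose_succ_succ, Finset.sum_add_distrib,
    Nat.choose_zero_right, add_assoc]

theorem heavyRowCount_eq (m s : ℕ) :
    heavyRowCount m s = ∑ i ∈ Finset.range (m + 1 - s), m.choose i := by
  induction m generalizing s with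
  | zero =>
    rcases s with _ | s
    · simp [heavyRowCount_zero]
    · simp [heavyRowCount_zero_succ]
  | succ m ih =>
    rcases s with _ | s
    · rw [heavyRowCount_zero, Nat.sub_zero, Nat.sum_range_choose]
    rw [heavyRowCount_succ_succ, ih, ih]
    rcases Nat.lt_or_ge m s with h | h
    · simp [Nat.sub_eq_zero_of_le h.le, Nat.sub_eq_zero_of_le h]
    · rw [show m + 1 + 1 - (s + 1) = m - s + 1 by omega, show m + 1 - (s + 1) = m - s by omega,
        show m + 1 - s = m - s + 1 by omega, sum_range_succ_choose_succ]

/-- The number of rows of `[[1,0],[1,1]]^{⊗m}` with Hamming weight at least `2^(m-r)`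
(the dimension of RM(m,r)) equals `∑_{i=0}^{r} C(m,i)`. -/
theorem stmt2 (m r : ℕ) (hr : r ≤ m) :
    (Finset.univ.filter fun j : Fin (2 ^ m) =>
        2 ^ (m - r) ≤ hammingNorm (kronPow Fmat m j)).card
      = ∑ i ∈ Finset.range (r + 1), m.choose i := by
  rw [← heavyRowCount, heavyRowCount_eq, show m + 1 - (m - r) = r + 1 by omega]
end

section
/- The Kronecker product of the generator matrices of RM(m1,r1) and RM(m2,r2) generates a code that is a subcode of RM(m1+m2, r1+r2). -/
/-!
Row `i` of `F^{⊗m}` has entries `∏ₜ F(iₜ, kₜ)`, a product over the binary digits of the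
indices. Splitting the digits of an index of `F^{⊗(m1+m2)}` into its low `m2` and high `m1`
digits shows that the Kronecker product of row `i` of `F^{⊗m1}` and row `j` of `F^{⊗m2}` is
itself a row of `F^{⊗(m1+m2)}`, and its Hamming weight is the product of the two weights,
hence at least `2^(m1-r1) * 2^(m2-r2) ≥ 2^(m1+m2-(r1+r2))`.
-/

open Matrix Kronecker

/-- The rows of the generator matrix of RM(m,r): rows of `[[1,0],[1,1]]^{⊗m}` of
Hamming weight at least `2^(m-r)`. -/
def RMrows (m r : ℕ) : Set (Fin (2 ^ m) → ZMod 2) :=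
  {v | (∃ i, v = kronPow Fmat m i) ∧ 2 ^ (m - r) ≤ hammingNorm v}

/-- The Reed-Muller code RM(m,r). -/
def RMcode (m r : ℕ) : Submodule (ZMod 2) (Fin (2 ^ m) → ZMod 2) :=
  Submodule.span (ZMod 2) (RMrows m r)

/-- Identification of `Fin (2^m1) × Fin (2^m2)` with `Fin (2^(m1+m2))`. -/
def dimEquiv (m1 m2 : ℕ) : Fin (2 ^ m1) × Fin (2 ^ m2) ≃ Fin (2 ^ (m1 + m2)) :=
  finProdFinEquiv.trans (finCongr (pow_add 2 m1 m2).symm)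

section HammingNorm

variable {ι κ R : Type*} [Fintype ι] [Fintype κ] [DecidableEq R]

theorem hammingNorm_comp_equiv_s6 [Zero R] (e : ι ≃ κ) (x : κ → R) :
    hammingNorm (x ∘ e) = hammingNorm x :=
  Finset.card_equiv e (by simp)

theorem hammingNorm_mul_prod [MulZeroClass R] [NoZeroDivisors R] (u : ι → R) (v : κ → R) :
    hammingNorm (fun p : ι × κ => u p.1 * v p.2) = hammingNorm u * hammingNorm v := by
  rw [hammingNorm, hammingNorm, hammingNorm, ← Finset.card_product]
  congr 1
  ext p
  simp

end HammingNorm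

def binDigit (n t : ℕ) : Fin 2 := ⟨(n.testBit t).toNat, Bool.toNat_lt _⟩

theorem binDigit_mod_two_pow {n m t : ℕ} (h : t < m) : binDigit (n % 2 ^ m) t = binDigit n t := by
  simp [binDigit, Nat.testBit_mod_two_pow, h]

theorem binDigit_two_pow_mul_add_of_lt {a b k t : ℕ} (hb : b < 2 ^ k) (ht : t < k) :
    binDigit (2 ^ k * a + b) t = binDigit b t := by
  simp [binDigit, Nat.testBit_two_pow_mul_add a hb, ht]

theorem binDigit_two_pow_mul_add_add {a b k : ℕ} (hb : b < 2 ^ k) (t : ℕ) :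
    binDigit (2 ^ k * a + b) (k + t) = binDigit a t := by
  simp [binDigit, Nat.testBit_two_pow_mul_add a hb]

theorem binDigit_eq_div_two_pow {n m : ℕ} (h : n < 2 ^ (m + 1)) :
    binDigit n m = ⟨n / 2 ^ m, Nat.div_lt_of_lt_mul (by rwa [← pow_succ])⟩ := by
  ext
  simp only [binDigit, Nat.toNat_testBit]
  exact Nat.mod_eq_of_lt (Nat.div_lt_of_lt_mul (by rwa [← pow_succ]))

theorem dimEquiv_val {m1 m2 : ℕ} (p : Fin (2 ^ m1) × Fin (2 ^ m2)) :
    (dimEquiv m1 m2 p : ℕ) = 2 ^ m2 * p.1 + p.2 := by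
  simp [dimEquiv, finProdFinEquiv, add_comm]

section KronPow

variable {R : Type*} [CommRing R] (A : Matrix (Fin 2) (Fin 2) R)

theorem kronPow_succ_apply_s6 {m : ℕ} (i k : Fin (2 ^ (m + 1))) :
    kronPow A (m + 1) i k = A (binDigit i m) (binDigit k m) *
      kronPow A m ⟨i % 2 ^ m, Nat.mod_lt _ (Nat.two_pow_pos m)⟩
        ⟨k % 2 ^ m, Nat.mod_lt _ (Nat.two_pow_pos m)⟩ := by
  rw [binDigit_eq_div_two_pow i.isLt, binDigit_eq_div_two_pow k.isLt]
  simp [kronPow, finProdFinEquiv, Fin.divNat, Fin.modNat]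

theorem kronPow_apply {m : ℕ} (i k : Fin (2 ^ m)) :
    kronPow A m i k = ∏ t ∈ Finset.range m, A (binDigit i t) (binDigit k t) := by
  induction m with
  | zero =>
    obtain rfl : i = k := Subsingleton.elim (α := Fin 1) i k
    simp [kronPow]
  | succ m ih =>
    rw [kronPow_succ_apply_s6, ih, Finset.prod_range_succ, mul_comm]
    congr 1
    refine Finset.prod_congr rfl fun t ht => ?_
    rw [Finset.mem_range] at ht
    simp only [binDigit_mod_two_pow ht]

theorem kronPow_add_apply {m1 m2 : ℕ} (i k : Fin (2 ^ m1)) (j l : Fin (2 ^ m2)) :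
    kronPow A (m1 + m2) (dimEquiv m1 m2 (i, j)) (dimEquiv m1 m2 (k, l)) =
      kronPow A m1 i k * kronPow A m2 j l := by
  simp only [kronPow_apply, dimEquiv_val]
  rw [add_comm m1, Finset.prod_range_add, mul_comm]
  congr 1
  · refine Finset.prod_congr rfl fun t _ => ?_
    rw [binDigit_two_pow_mul_add_add j.isLt, binDigit_two_pow_mul_add_add l.isLt]
  · refine Finset.prod_congr rfl fun t ht => ?_
    rw [Finset.mem_range] at ht
    rw [binDigit_two_pow_mul_add_of_lt j.isLt ht, binDigit_two_pow_mul_add_of_lt l.isLt ht]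

end KronPow

theorem stmt6_general (m1 r1 m2 r2 : ℕ) :
    Submodule.span (ZMod 2)
        {w : Fin (2 ^ (m1 + m2)) → ZMod 2 |
          ∃ u ∈ RMrows m1 r1, ∃ v ∈ RMrows m2 r2,
            w = fun t => u ((dimEquiv m1 m2).symm t).1 * v ((dimEquiv m1 m2).symm t).2}
      ≤ RMcode (m1 + m2) (r1 + r2) := by
  rw [Submodule.span_le]
  rintro w ⟨u, ⟨⟨i, rfl⟩, hu⟩, v, ⟨⟨j, rfl⟩, hv⟩, rfl⟩
  refine Submodule.subset_span ⟨⟨dimEquiv m1 m2 (i, j), funext fun t => ?_⟩, ?_⟩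
  · obtain ⟨⟨k, l⟩, rfl⟩ := (dimEquiv m1 m2).surjective t
    simp [kronPow_add_apply]
  · calc 2 ^ (m1 + m2 - (r1 + r2)) ≤ 2 ^ ((m1 - r1) + (m2 - r2)) :=
          Nat.pow_le_pow_right two_pos (by omega)
      _ = 2 ^ (m1 - r1) * 2 ^ (m2 - r2) := pow_add 2 _ _
      _ ≤ hammingNorm (kronPow Fmat m1 i) * hammingNorm (kronPow Fmat m2 j) :=
          Nat.mul_le_mul hu hv
      _ = _ := (hammingNorm_mul_prod _ _).symm.trans
          (hammingNorm_comp_equiv_s6 (dimEquiv m1 m2).symm _).symm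

/-- The code generated by the Kronecker product of the generator matrices of
RM(m1,r1) and RM(m2,r2), viewed as a length-`2^(m1+m2)` code, is a subcode of
RM(m1+m2, r1+r2). -/
theorem stmt6 (m1 r1 m2 r2 : ℕ) (h1 : r1 ≤ m1) (h2 : r2 ≤ m2) :
    Submodule.span (ZMod 2)
        {w : Fin (2 ^ (m1 + m2)) → ZMod 2 |
          ∃ u ∈ RMrows m1 r1, ∃ v ∈ RMrows m2 r2,
            w = fun t => u ((dimEquiv m1 m2).symm t).1 * v ((dimEquiv m1 m2).symm t).2}
      ≤ RMcode (m1 + m2) (r1 + r2) :=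
  stmt6_general m1 r1 m2 r2
end

section
/- For all integers r1 ≤ m1 and r2 ≤ m2 with r1, r2 ≥ 0, the product of the binomial sums satisfies (∑_{i=0}^{r1} C(m1,i)) · (∑_{j=0}^{r2} C(m2,j)) ≤ ∑_{t=0}^{r1+r2} C(m1+m2, t). -/
/-!
By Vandermonde, `C(m1+m2, t) = ∑_{i+j=t} C(m1,i) C(m2,j)`. Expanding the product gives the terms
`C(m1,i) C(m2,j)` with `i ≤ r1`, `j ≤ r2`; grouped by `t = i + j`, they are among the terms of the
right-hand side with `t ≤ r1 + r2`, and all terms are nonnegative.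
-/

open Finset

theorem sum_range_mul_sum_range_le_sum_antidiagonal {R : Type*} [CommSemiring R] [PartialOrder R]
    [CanonicallyOrderedAdd R] (f g : ℕ → R) (a b : ℕ) :
    (∑ i ∈ range (a + 1), f i) * (∑ j ∈ range (b + 1), g j)
      ≤ ∑ t ∈ range (a + b + 1), ∑ p ∈ antidiagonal t, f p.1 * g p.2 := by
  rw [sum_mul_sum, ← sum_product',
    ← sum_fiberwise_of_maps_to (g := fun p : ℕ × ℕ => p.1 + p.2) (t := range (a + b + 1))]
  · refine sum_le_sum fun t _ => sum_le_sum_of_subset fun p hp => ?_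
    simpa using (mem_filter.mp hp).2
  · intro p hp
    simp only [mem_product, mem_range] at hp ⊢
    omega

theorem stmt7_general (m1 m2 r1 r2 : ℕ) :
    (∑ i ∈ Finset.range (r1 + 1), m1.choose i) *
        (∑ j ∈ Finset.range (r2 + 1), m2.choose j)
      ≤ ∑ t ∈ Finset.range (r1 + r2 + 1), (m1 + m2).choose t := by
  simpa only [Nat.add_choose_eq] using
    sum_range_mul_sum_range_le_sum_antidiagonal (m1.choose ·) (m2.choose ·) r1 r2

/-- The dimension of the product of RM(m1,r1) and RM(m2,r2) is at most the dimension
of RM(m1+m2, r1+r2):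
`(∑_{i=0}^{r1} C(m1,i)) · (∑_{j=0}^{r2} C(m2,j)) ≤ ∑_{t=0}^{r1+r2} C(m1+m2,t)`. -/
theorem stmt7 (m1 m2 r1 r2 : ℕ) (h1 : r1 ≤ m1) (h2 : r2 ≤ m2) :
    (∑ i ∈ Finset.range (r1 + 1), m1.choose i) *
        (∑ j ∈ Finset.range (r2 + 1), m2.choose j)
      ≤ ∑ t ∈ Finset.range (r1 + r2 + 1), (m1 + m2).choose t :=
  stmt7_general m1 m2 r1 r2
end

section
/- Let G be the generator matrix of RM(m,1) with the first row all-ones, and for i ≥ 2 let I_{0,i} and I_{1,i} be the sets of indices j ∈ {1,…,2^m} such that the codeword corresponding to Hadamard column h_j has message bit u_i = 0 and u_i = 1 respectively. Then max over codewords with u_i = 0 of ⟨l, 1−2c⟩ equals max over j ∈ I_{0,i} of |l_WH(j)|, and similarly with 1 and I_{1,i}, where l_WH = l·H. -/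
open Matrix Kronecker

/-- The Sylvester–Hadamard kernel `[[1,1],[1,-1]]` over ℝ. -/
def Hmat : Matrix (Fin 2) (Fin 2) ℝ := !![1, 1; 1, -1]

/-- Generator matrix of RM(m,1): first row all-ones, remaining rows enumerate all
binary `m`-vectors as columns (MSB first, matching the Hadamard Kronecker order). -/
def Grm (m : ℕ) : Matrix (Fin (m + 1)) (Fin (2 ^ m)) (ZMod 2) :=
  fun i j => if i.val = 0 then 1 else if j.val.testBit (m - i.val) then 1 else 0

/-- BPSK modulation `c ↦ 1 - 2c`. -/
def bpsk {n : ℕ} (c : Fin n → ZMod 2) : Fin n → ℝ := fun j => 1 - 2 * ((c j).val : ℝ)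

/-!
Write a message `u` as its sign bit `u 0` together with the column index `k` whose binary
digits, most significant first, are `u 1, …, u m`. Since `c ↦ 1 - 2c` is a character of
`ZMod 2` and the Hadamard entry `H j k` is that character applied to the `ZMod 2` inner product
of the digits of `j` and `k`, the modulated codeword `1 - 2 uG` is `±` the `k`-th column of `H`,
so `⟨l, 1 - 2 uG⟩ = ±(l H)_k`. A constraint `u_i = b` with `i ≠ 0` only restricts `k` and leaves
the sign free, so each correlation is at most some `|(l H)_k|` and each such value is attained.
-/

open Finset

lemma ZMod.two_cases (a : ZMod 2) : a = 0 ∨ a = 1 := by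
  revert a
  decide

def bpskChar : AddChar (ZMod 2) ℝ where
  toFun a := 1 - 2 * (a.val : ℝ)
  map_zero_eq_one' := by simp
  map_add_eq_mul' a b := by
    rcases ZMod.two_cases a with rfl | rfl <;> rcases ZMod.two_cases b with rfl | rfl <;>
      simp only [ZMod.val_zero, ZMod.val_one, add_zero, zero_add,
        show ((1 : ZMod 2) + 1).val = 0 from rfl] <;> norm_num

lemma bpsk_apply {n : ℕ} (c : Fin n → ZMod 2) (j : Fin n) : bpsk c j = bpskChar (c j) := rfl

lemma bpskChar_one : bpskChar 1 = -1 := by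
  change 1 - 2 * ((1 : ZMod 2).val : ℝ) = -1
  norm_num [ZMod.val_one]

lemma bpskChar_mul_le_abs (a : ZMod 2) (w : ℝ) : bpskChar a * w ≤ |w| := by
  rcases ZMod.two_cases a with rfl | rfl
  · simpa using le_abs_self w
  · simpa [bpskChar_one] using neg_le_abs w

lemma exists_bpskChar_mul_eq_abs (w : ℝ) : ∃ a, bpskChar a * w = |w| := by
  rcases abs_choice w with h | h
  · exact ⟨0, by simp [h]⟩
  · exact ⟨1, by simp [h, bpskChar_one]⟩

def zmodBit (n t : ℕ) : ZMod 2 := if n.testBit t then 1 else 0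

lemma zmodBit_eq_cast_div (n t : ℕ) : zmodBit n t = ((n / 2 ^ t : ℕ) : ZMod 2) := by
  rw [zmodBit, Nat.testBit_eq_decide_div_mod_eq, ← ZMod.natCast_mod (n / 2 ^ t)]
  rcases Nat.mod_two_eq_zero_or_one (n / 2 ^ t) with h | h <;> simp [h]

lemma zmodBit_mod_two_pow {n m t : ℕ} (ht : t < m) : zmodBit (n % 2 ^ m) t = zmodBit n t := by
  simp [zmodBit, Nat.testBit_mod_two_pow, ht]

lemma exists_zmodBit_eq (m : ℕ) (f : Fin m → ZMod 2) :
    ∃ k : Fin (2 ^ m), ∀ t : Fin m, zmodBit k t = f t := by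
  set digits : Fin m → Fin 2 := fun t => ⟨(f t).val, (f t).val_lt⟩
  refine ⟨finFunctionFinEquiv digits, fun t => ?_⟩
  have hdigit := congrArg (fun d => (d t).val) (finFunctionFinEquiv.symm_apply_apply digits)
  simp only [finFunctionFinEquiv_symm_apply_val, digits] at hdigit
  rw [zmodBit_eq_cast_div, ← ZMod.natCast_mod, hdigit, ZMod.natCast_zmod_val]

lemma kronPow_succ_apply_s18 {R : Type*} [CommRing R] (A : Matrix (Fin 2) (Fin 2) R) (m : ℕ)
    (j k : Fin (2 ^ (m + 1))) :
    kronPow A (m + 1) j k =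
      A (finCongr (pow_succ' 2 m) j).divNat (finCongr (pow_succ' 2 m) k).divNat *
        kronPow A m (finCongr (pow_succ' 2 m) j).modNat (finCongr (pow_succ' 2 m) k).modNat :=
  rfl

lemma Hmat_apply (a b : Fin 2) : Hmat a b = bpskChar (a.val * b.val) := by
  fin_cases a <;> fin_cases b <;> simp [Hmat, bpskChar_one]

lemma kronPow_Hmat_apply (m : ℕ) (j k : Fin (2 ^ m)) :
    kronPow Hmat m j k = bpskChar (∑ t ∈ range m, zmodBit j t * zmodBit k t) := by
  induction m with
  | zero =>
    obtain rfl : j = k := Subsingleton.elim (α := Fin 1) j k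
    simp [kronPow]
  | succ m ih =>
    rw [kronPow_succ_apply_s18, ih, Hmat_apply, sum_range_succ, AddChar.map_add_eq_mul, mul_comm]
    simp only [Fin.coe_divNat, Fin.coe_modNat, finCongr_apply, Fin.val_cast,
      zmodBit_eq_cast_div j m, zmodBit_eq_cast_div k m]
    congr 2
    refine sum_congr rfl fun t ht => ?_
    rw [zmodBit_mod_two_pow (mem_range.mp ht), zmodBit_mod_two_pow (mem_range.mp ht)]

lemma Grm_apply_of_ne_zero {m : ℕ} {i : Fin (m + 1)} (hi : i.val ≠ 0) (j : Fin (2 ^ m)) :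
    Grm m i j = zmodBit j (m - i.val) :=
  if_neg hi

def rmMessage (m : ℕ) (a : ZMod 2) (k : Fin (2 ^ m)) : Fin (m + 1) → ZMod 2 :=
  fun i => if i.val = 0 then a else zmodBit k (m - i.val)

lemma rmMessage_of_ne_zero {m : ℕ} (a : ZMod 2) (k : Fin (2 ^ m)) {i : Fin (m + 1)}
    (hi : i.val ≠ 0) : rmMessage m a k i = zmodBit k (m - i.val) :=
  if_neg hi

lemma exists_rmMessage_eq {m : ℕ} (u : Fin (m + 1) → ZMod 2) :
    ∃ k, rmMessage m (u 0) k = u := by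
  obtain ⟨k, hk⟩ := exists_zmodBit_eq m fun t => u ⟨m - t, by omega⟩
  refine ⟨k, funext fun i => ?_⟩
  by_cases hi : i.val = 0
  · obtain rfl : i = 0 := Fin.ext hi
    simp [rmMessage]
  · rw [rmMessage_of_ne_zero _ _ hi, hk ⟨m - i.val, by omega⟩]
    exact congrArg u (Fin.ext (by simp only; omega))

lemma vecMul_rmMessage_Grm (m : ℕ) (a : ZMod 2) (k j : Fin (2 ^ m)) :
    vecMul (rmMessage m a k) (Grm m) j = a + ∑ t ∈ range m, zmodBit j t * zmodBit k t := by
  rw [vecMul, dotProduct, Fin.sum_univ_succ]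
  have hsucc (x : Fin m) : x.succ.val ≠ 0 := by simp
  simp only [rmMessage_of_ne_zero _ _ (hsucc _), Grm_apply_of_ne_zero (hsucc _), Fin.val_succ]
  congr 1
  · simp [rmMessage, Grm]
  · rw [Fin.sum_univ_eq_sum_range (fun t => zmodBit k (m - (t + 1)) * zmodBit j (m - (t + 1))),
      ← sum_range_reflect]
    refine sum_congr rfl fun t ht => ?_
    rw [show m - (m - 1 - t + 1) = t by have := mem_range.mp ht; omega, mul_comm]

lemma correlation_rmMessage (m : ℕ) (l : Fin (2 ^ m) → ℝ) (a : ZMod 2) (k : Fin (2 ^ m)) :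
    ∑ j, l j * bpsk (vecMul (rmMessage m a k) (Grm m)) j =
      bpskChar a * vecMul l (kronPow Hmat m) k := by
  simp only [bpsk_apply, vecMul_rmMessage_Grm, AddChar.map_add_eq_mul, ← kronPow_Hmat_apply]
  simp only [vecMul, dotProduct, mul_sum]
  exact sum_congr rfl fun j _ => by ring

lemma sSup_correlation_eq_sSup_abs_hadamard (m : ℕ) (l : Fin (2 ^ m) → ℝ) (i : Fin (m + 1))
    (hi : i.val ≠ 0) (b : ZMod 2) :
    sSup {x : ℝ | ∃ u : Fin (m + 1) → ZMod 2, u i = b ∧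
        x = ∑ j, l j * bpsk (vecMul u (Grm m)) j} =
      sSup {x : ℝ | ∃ j : Fin (2 ^ m), zmodBit j (m - i.val) = b ∧
        x = |vecMul l (kronPow Hmat m) j|} := by
  apply csSup_eq_csSup_of_forall_exists_le
  · rintro _ ⟨u, rfl, rfl⟩
    obtain ⟨k, hk⟩ := exists_rmMessage_eq u
    refine ⟨_, ⟨k, ?_, rfl⟩, ?_⟩
    · rw [← hk, rmMessage_of_ne_zero _ _ hi]
    · rw [← hk, correlation_rmMessage]
      exact bpskChar_mul_le_abs _ _
  · rintro _ ⟨k, hk, rfl⟩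
    obtain ⟨a, ha⟩ := exists_bpskChar_mul_eq_abs (vecMul l (kronPow Hmat m) k)
    refine ⟨_, ⟨rmMessage m a k, ?_, rfl⟩, ?_⟩
    · rwa [rmMessage_of_ne_zero _ _ hi]
    · rw [correlation_rmMessage, ha]

/-- For RM(m,1) and a message index `i ≥ 2` (here `i.val ≠ 0`), the maximum of
`⟨l, 1-2c⟩` over codewords with `u_i = 0` equals the maximum of `|l_WH(j)|` over the
indices `j ∈ I_{0,i}` of Hadamard columns whose message has `u_i = 0` (namely those
`j` with bit `m - i` equal to 0), and similarly for `u_i = 1` and `I_{1,i}`. -/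
theorem stmt18 (m : ℕ) (l : Fin (2 ^ m) → ℝ) (i : Fin (m + 1)) (hi : i.val ≠ 0) :
    (sSup {x : ℝ | ∃ u : Fin (m + 1) → ZMod 2, u i = 0 ∧
          x = ∑ j, l j * bpsk (Matrix.vecMul u (Grm m)) j} =
        sSup {x : ℝ | ∃ j : Fin (2 ^ m), ¬ j.val.testBit (m - i.val) ∧
          x = |Matrix.vecMul l (kronPow Hmat m) j|}) ∧
      (sSup {x : ℝ | ∃ u : Fin (m + 1) → ZMod 2, u i = 1 ∧
          x = ∑ j, l j * bpsk (Matrix.vecMul u (Grm m)) j} =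
        sSup {x : ℝ | ∃ j : Fin (2 ^ m), j.val.testBit (m - i.val) ∧
          x = |Matrix.vecMul l (kronPow Hmat m) j|}) := by
  constructor
  · simpa [zmodBit] using sSup_correlation_eq_sSup_abs_hadamard m l i hi 0
  · simpa [zmodBit] using sSup_correlation_eq_sSup_abs_hadamard m l i hi 1
end
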